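/- If T is a nonempty positive word in increasing form, then the element of B₃ represented by T cannot be written as δ · P with P a (possibly empty) positive word; in other words, an increasing-form positive word is never left-divisible by δ in the positive monoid of B₃. -/

import Mathlib

/-- The band relations `a₂a₁ = a₃a₂ = a₁a₃`, with subscripts taken modulo 3
(the generator `a₃` is indexed by `0 : ZMod 3`). -/
def bandRels : Set (FreeGroup (ZMod 3)) :=
  { FreeGroup.of 2 * FreeGroup.of 1 * (FreeGroup.of 0 * FreeGroup.of 2)⁻¹,
    FreeGroup.of 0 * FreeGroup.of 2 * (FreeGroup.of 1 * FreeGroup.of 0)⁻¹ }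

/-- The band-presented group `⟨a₁, a₂, a₃ | a₂a₁ = a₃a₂ = a₁a₃⟩` (a model of `B₃`). -/
abbrev BandB3 := PresentedGroup bandRels

/-- The band generators `a i`, indexed by `ZMod 3` (so `a 0 = a₃`). -/
def a (i : ZMod 3) : BandB3 := PresentedGroup.of i

/-- The fundamental element `δ = a₂a₁ (= a₃a₂ = a₁a₃)`. -/
def δ : BandB3 := a 2 * a 1

/-- The positive word in increasing form with initial subscript `τ` and exponent
sequence `s = (s₁, …, s_t)`, namely `a_τ^{s₁} a_{τ+1}^{s₂} ⋯ a_{τ+t−1}^{s_t}`,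
with consecutive syllable subscripts increasing by 1 modulo 3. -/
def tailProd (τ : ZMod 3) (s : List ℕ) : BandB3 :=
  ((List.range s.length).map (fun i : ℕ => a (τ + (i : ZMod 3)) ^ s.getD i 0)).prod

/-!
Map `B₃` onto the modular group `C₂ * C₃ = ⟨x, y | x² = y³ = 1⟩` by
`a₁ ↦ xy²`, `a₂ ↦ y²x`, `a₃ ↦ yxy`, so that `δ ↦ y`, and look at reduced words.
Reading an increasing word from the right, each new letter `aᵢ` adds one `x` and no
cancellation ever occurs (the reduced word keeps a prefix determined by `i`), so the image
of an increasing word of length `n` contains `n` letters `x`. The image of `δ · P` contains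
at most `|P|` of them, since each generator adds at most one `x` and `y` adds none; but
`|P| = n - 2` by comparing exponent sums.
-/

namespace BandB3

/-- `y2` stands for `y²`. -/
inductive Letter
  | x
  | y
  | y2
deriving DecidableEq

open Letter

def isX : Letter → Bool
  | x => true
  | _ => false

def IsReduced (w : List Letter) : Prop :=
  w.IsChain fun p q => isX p ≠ isX q

def mulX : List Letter → List Letter
  | x :: t => t
  | w => x :: w

def mulY : List Letter → List Letter
  | y :: t => y2 :: t
  | y2 :: t => t
  | w => y :: w

theorem IsReduced.mulX {w : List Letter} (h : IsReduced w) : IsReduced (mulX w) := by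
  rcases w with _ | ⟨_ | _ | _, t⟩ <;> simp_all [IsReduced, BandB3.mulX, isX, List.isChain_cons]

theorem IsReduced.mulY {w : List Letter} (h : IsReduced w) : IsReduced (mulY w) := by
  rcases w with _ | ⟨_ | _ | _, t⟩ <;> simp_all [IsReduced, BandB3.mulY, isX, List.isChain_cons]

theorem mulX_mulX {w : List Letter} (h : IsReduced w) : mulX (mulX w) = w := by
  rcases w with _ | ⟨_ | _ | _, _ | ⟨_ | _ | _, t⟩⟩ <;>
    simp_all [IsReduced, mulX, isX, List.isChain_cons]

theorem mulY_mulY_mulY {w : List Letter} (h : IsReduced w) : mulY (mulY (mulY w)) = w := by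
  rcases w with _ | ⟨_ | _ | _, _ | ⟨_ | _ | _, t⟩⟩ <;>
    simp_all [IsReduced, mulY, isX, List.isChain_cons]

theorem count_mulX_le (w : List Letter) : (mulX w).count x ≤ w.count x + 1 := by
  rcases w with _ | ⟨_ | _ | _, t⟩ <;> (simp [mulX]; try omega)

@[simp]
theorem count_mulY (w : List Letter) : (mulY w).count x = w.count x := by
  rcases w with _ | ⟨_ | _ | _, t⟩ <;> simp [mulY]

def ReducedWord : Type := {w : List Letter // IsReduced w}

def permX : Equiv.Perm ReducedWord :=
  Function.Involutive.toPerm (fun w => ⟨mulX w.1, w.2.mulX⟩) fun w =>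
    Subtype.ext (mulX_mulX w.2)

def permY : Equiv.Perm ReducedWord where
  toFun w := ⟨mulY w.1, w.2.mulY⟩
  invFun w := ⟨mulY (mulY w.1), w.2.mulY.mulY⟩
  left_inv w := Subtype.ext (mulY_mulY_mulY w.2)
  right_inv w := Subtype.ext (mulY_mulY_mulY w.2)

theorem permX_mul_permX (g : Equiv.Perm ReducedWord) : permX * (permX * g) = g :=
  Equiv.ext fun w => Subtype.ext (mulX_mulX (g w).2)

theorem permX_mul_self : permX * permX = 1 := by
  simpa using permX_mul_permX 1

theorem permY_mul_permY_mul_permY (g : Equiv.Perm ReducedWord) :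
    permY * (permY * (permY * g)) = g :=
  Equiv.ext fun w => Subtype.ext (mulY_mulY_mulY (g w).2)

/-- The images of `a 0 = a₃`, `a₁`, `a₂`, in this order. -/
def genPerm : ZMod 3 → Equiv.Perm ReducedWord :=
  ![permY * permX * permY, permX * permY * permY, permY * permY * permX]

theorem genPerm_succ_mul_genPerm (i : ZMod 3) : genPerm (i + 1) * genPerm i = permY := by
  obtain rfl | rfl | rfl : i = 0 ∨ i = 1 ∨ i = 2 := by revert i; decide
  all_goals
    simp [genPerm, show (0 + 1 : ZMod 3) = 1 from rfl, show (1 + 1 : ZMod 3) = 2 from rfl,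
      show (2 + 1 : ZMod 3) = 0 from rfl, mul_assoc, permX_mul_self, permX_mul_permX,
      permY_mul_permY_mul_permY]

def toPerm : BandB3 →* Equiv.Perm ReducedWord :=
  PresentedGroup.toGroup (f := genPerm) <| by
    rintro r (rfl | rfl) <;>
      simp only [map_mul, map_inv, FreeGroup.lift_apply_of, mul_inv_eq_one]
    · exact (genPerm_succ_mul_genPerm 1).trans (genPerm_succ_mul_genPerm 2).symm
    · exact (genPerm_succ_mul_genPerm 2).trans (genPerm_succ_mul_genPerm 0).symm

theorem toPerm_a (i : ZMod 3) : toPerm (a i) = genPerm i :=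
  PresentedGroup.toGroup.of _

theorem toPerm_δ : toPerm δ = permY := by
  rw [δ, map_mul, toPerm_a, toPerm_a]
  exact genPerm_succ_mul_genPerm 1

def genAct : ZMod 3 → List Letter → List Letter :=
  ![mulY ∘ mulX ∘ mulY, mulX ∘ mulY ∘ mulY, mulY ∘ mulY ∘ mulX]

theorem genPerm_apply_val (i : ZMod 3) (w : ReducedWord) : (genPerm i w).1 = genAct i w.1 := by
  fin_cases i <;> rfl

theorem count_genAct_le (i : ZMod 3) (w : List Letter) :
    (genAct i w).count x ≤ w.count x + 1 := by
  fin_cases i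
  · simpa [genAct] using count_mulX_le (mulY w)
  · simpa [genAct] using count_mulX_le (mulY (mulY w))
  · simpa [genAct] using count_mulX_le w

def toWord (g : BandB3) : List Letter :=
  (toPerm g ⟨[], List.isChain_nil⟩).1

@[simp]
theorem toWord_one : toWord 1 = [] :=
  rfl

theorem toWord_a_mul (i : ZMod 3) (g : BandB3) : toWord (a i * g) = genAct i (toWord g) := by
  rw [toWord, toWord, map_mul, toPerm_a]
  exact genPerm_apply_val i _

theorem toWord_a_pow_mul (i : ZMod 3) (k : ℕ) (g : BandB3) :
    toWord (a i ^ k * g) = (genAct i)^[k] (toWord g) := by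
  induction k with
  | zero => simp
  | succ k ih => rw [pow_succ', mul_assoc, toWord_a_mul, ih, Function.iterate_succ_apply']

theorem toWord_δ_mul (g : BandB3) : toWord (δ * g) = mulY (toWord g) := by
  rw [toWord, toWord, map_mul, toPerm_δ]
  rfl

theorem count_toWord_prod_le (L : List (ZMod 3)) :
    (toWord (L.map a).prod).count x ≤ L.length := by
  induction L with
  | nil => simp
  | cons i L ih =>
    rw [List.map_cons, List.prod_cons, toWord_a_mul, List.length_cons]
    exact (count_genAct_le i _).trans (by omega)

/-- The prefix that the reduced word of an increasing word starting with `a i` begins with. -/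
def shapePrefix : ZMod 3 → List Letter :=
  ![[y, x], [x], [y2, x]]

def IncreasingShape (i : ZMod 3) (n : ℕ) (w : List Letter) : Prop :=
  (∃ t, w = shapePrefix i ++ t) ∧ w.count x = n

@[simp]
theorem count_shapePrefix (i : ZMod 3) : (shapePrefix i).count x = 1 := by
  fin_cases i <;> simp [shapePrefix]

theorem increasingShape_genAct_nil (i : ZMod 3) : IncreasingShape i 1 (genAct i []) := by
  fin_cases i <;> exact ⟨⟨_, rfl⟩, rfl⟩

theorem IncreasingShape.genAct_same {i : ZMod 3} {n : ℕ} {w : List Letter}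
    (h : IncreasingShape i n w) : IncreasingShape i (n + 1) (genAct i w) := by
  obtain ⟨⟨t, rfl⟩, rfl⟩ := h
  have : genAct i (shapePrefix i ++ t) = shapePrefix i ++ y2 :: x :: t := by
    fin_cases i <;> rfl
  refine ⟨⟨_, this⟩, ?_⟩
  simp [this]
  omega

theorem IncreasingShape.genAct_of_succ {i : ZMod 3} {n : ℕ} {w : List Letter}
    (h : IncreasingShape (i + 1) n w) : IncreasingShape i (n + 1) (genAct i w) := by
  obtain ⟨⟨t, rfl⟩, rfl⟩ := h
  have : genAct i (shapePrefix (i + 1) ++ t) = shapePrefix i ++ y :: x :: t := by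
    fin_cases i <;> rfl
  refine ⟨⟨_, this⟩, ?_⟩
  simp [this]
  omega

theorem IncreasingShape.iterate_genAct {i : ZMod 3} {n : ℕ} {w : List Letter}
    (h : IncreasingShape i n w) (k : ℕ) : IncreasingShape i (n + k) ((genAct i)^[k] w) := by
  induction k with
  | zero => exact h
  | succ k ih => rw [Function.iterate_succ_apply']; exact ih.genAct_same

theorem tailProd_nil (τ : ZMod 3) : tailProd τ [] = 1 :=
  rfl

theorem tailProd_cons (τ : ZMod 3) (k : ℕ) (s : List ℕ) :
    tailProd τ (k :: s) = a τ ^ k * tailProd (τ + 1) s := by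
  simp only [tailProd, List.length_cons, List.range_succ_eq_map, List.map_cons, List.map_map,
    List.prod_cons]
  congr 1
  · simp
  · congr 1
    refine List.map_congr_left fun i _ => ?_
    simp only [Function.comp_apply, List.getD_cons_succ]
    congr 2
    push_cast
    ring

theorem increasingShape_toWord_tailProd (τ : ZMod 3) (s : List ℕ) (hne : s ≠ [])
    (hpos : ∀ k ∈ s, 1 ≤ k) : IncreasingShape τ s.sum (toWord (tailProd τ s)) := by
  induction s generalizing τ with
  | nil => exact absurd rfl hne
  | cons k s ih =>
    obtain ⟨m, rfl⟩ : ∃ m, k = m + 1 := ⟨k - 1, by have := hpos k (by simp); omega⟩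
    have hfirst : IncreasingShape τ (s.sum + 1) (genAct τ (toWord (tailProd (τ + 1) s))) := by
      rcases eq_or_ne s [] with rfl | hs
      · simpa [tailProd_nil] using increasingShape_genAct_nil τ
      · exact (ih (τ + 1) hs fun k hk => hpos k (by simp [hk])).genAct_of_succ
    rw [tailProd_cons, toWord_a_pow_mul, Function.iterate_succ_apply, List.sum_cons]
    convert hfirst.iterate_genAct m using 1
    omega

def exponentSum : BandB3 →* Multiplicative ℤ :=
  PresentedGroup.toGroup (f := fun _ => Multiplicative.ofAdd 1) <| by
    rintro r (rfl | rfl) <;> simp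

theorem exponentSum_a (i : ZMod 3) : exponentSum (a i) = Multiplicative.ofAdd 1 :=
  PresentedGroup.toGroup.of _

theorem exponentSum_δ : exponentSum δ = Multiplicative.ofAdd 2 := by
  rw [δ, map_mul, exponentSum_a, exponentSum_a, ← ofAdd_add]
  rfl

theorem exponentSum_prod (L : List (ZMod 3)) :
    exponentSum (L.map a).prod = Multiplicative.ofAdd (L.length : ℤ) := by
  induction L with
  | nil => rfl
  | cons i L ih => simp [exponentSum_a, ih, ← ofAdd_add, add_comm]

theorem exponentSum_tailProd (τ : ZMod 3) (s : List ℕ) :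
    exponentSum (tailProd τ s) = Multiplicative.ofAdd (s.sum : ℤ) := by
  induction s generalizing τ with
  | nil => rfl
  | cons k s ih =>
    rw [tailProd_cons, map_mul, map_pow, exponentSum_a, ih, ← ofAdd_nsmul, ← ofAdd_add]
    simp

end BandB3

open BandB3 in
/-- A nonempty positive word in increasing form is never left-divisible by `δ`:
it cannot be written as `δ · P` with `P` a (possibly empty) positive word, i.e. a
product of band generators with no inverses (recorded as the list of its
subscripts). -/
theorem increasing_form_not_delta_divisible (τ : ZMod 3) (s : List ℕ)
    (hne : s ≠ []) (hpos : ∀ x ∈ s, 1 ≤ x) :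
    ¬ ∃ L : List (ZMod 3), tailProd τ s = δ * (L.map a).prod := by
  rintro ⟨L, h⟩
  have hlength : (s.sum : ℤ) = 2 + L.length := by
    have := congrArg exponentSum h
    rw [exponentSum_tailProd, map_mul, exponentSum_δ, exponentSum_prod, ← ofAdd_add] at this
    exact Multiplicative.ofAdd.injective this
  have hcount : s.sum ≤ L.length := by
    have := (increasingShape_toWord_tailProd τ s hne hpos).2
    rw [h, toWord_δ_mul, count_mulY] at this
    exact this ▸ count_toWord_prod_le L
  omega
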